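/- Let M = (Q, A, τ) be a self-invertible Mealy automaton and let u ∈ A* be a nonempty word. Then the following are equivalent: (1) the orbit P_M·u^ω = { s·u^ω : s ∈ Q* } is finite; (2) the number of ~A-equivalence classes met by the sets { s·uⁿ : s ∈ Q* } is bounded independently of n; (3) the number of ~D-equivalence classes met by { s·uⁿ : s ∈ Q* } is bounded independently of n; (4) the union ⋃_{n ≥ 0} { s·uⁿ : s ∈ Q* } meets only finitely many ~A-classes; (5) that union meets only finitely many ~D-classes; (6) the image of u in D_M = A*/~A has finite order; (7) the image of u in D'_M = A*/~D has finite order. -/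

import Mathlib

namespace AutGrp

/-- A Mealy automaton with state set `Q` and alphabet `A`:
`step q a = (q · a, q @ a)` (output letter, next state). -/
structure Mealy (Q A : Type*) where
  step : Q → A → A × Q

namespace Mealy

variable {Q A : Type*}

/-- The output letter `q · a`. -/
def o (M : Mealy Q A) (q : Q) (a : A) : A := (M.step q a).1

/-- The next state `q @ a`. -/
def t (M : Mealy Q A) (q : Q) (a : A) : Q := (M.step q a).2

/-- Action of a single state on a word of letters: `q · w`. -/
def actA (M : Mealy Q A) : Q → List A → List A
  | _, [] => []
  | q, a :: w => M.o q a :: M.actA (M.t q a) w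

/-- State reached from `q` after reading the word `w`: `q @ w`. -/
def stA (M : Mealy Q A) : Q → List A → Q
  | q, [] => q
  | q, a :: w => M.stA (M.t q a) w

/-- Action of a word of states on a word of letters: `s · u` (rightmost state acts first). -/
def actW (M : Mealy Q A) : List Q → List A → List A
  | [], u => u
  | q :: s, u => M.actA q (M.actW s u)

/-- Word of states reached after reading `u`: `s @ u`. -/
def stW (M : Mealy Q A) : List Q → List A → List Q
  | [], _ => []
  | q :: s, u => M.stA q (M.actW s u) :: M.stW s u

/-- `M` is invertible if each state acts on `A` by a bijection. -/
def Invertible (M : Mealy Q A) : Prop := ∀ q : Q, Function.Bijective (M.o q)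

/-- `M` is reversible if each letter acts on `Q` by a bijection. -/
def Reversible (M : Mealy Q A) : Prop := ∀ a : A, Function.Bijective (fun q => M.t q a)

theorem actA_append (M : Mealy Q A) (q : Q) (x y : List A) :
    M.actA q (x ++ y) = M.actA q x ++ M.actA (M.stA q x) y := by
  induction x generalizing q with
  | nil => simp [actA, stA]
  | cons a w ih => simp [actA, stA, ih]

theorem stA_append (M : Mealy Q A) (q : Q) (x y : List A) :
    M.stA q (x ++ y) = M.stA (M.stA q x) y := by
  induction x generalizing q with
  | nil => simp [stA]
  | cons a w ih => simp [stA, ih]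

theorem actW_append_states (M : Mealy Q A) (s u : List Q) (w : List A) :
    M.actW (s ++ u) w = M.actW s (M.actW u w) := by
  induction s with
  | nil => simp [actW]
  | cons q s ih => simp [actW, ih]

theorem actW_append (M : Mealy Q A) (s : List Q) (x y : List A) :
    M.actW s (x ++ y) = M.actW s x ++ M.actW (M.stW s x) y := by
  induction s with
  | nil => simp [actW, stW]
  | cons q s ih => simp [actW, stW, ih, actA_append]

theorem stW_append (M : Mealy Q A) (s : List Q) (x y : List A) :
    M.stW s (x ++ y) = M.stW (M.stW s x) y := by
  induction s with
  | nil => simp [stW]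
  | cons q s ih => simp [stW, actW, ih, actW_append, stA_append]

theorem actW_stW_congr (M : Mealy Q A) {p p' : List Q}
    (h : ∀ w : List A, M.actW p w = M.actW p' w) (u w : List A) :
    M.actW (M.stW p u) w = M.actW (M.stW p' u) w := by
  have h1 := M.actW_append p u w
  have h2 := M.actW_append p' u w
  rw [h u, h (u ++ w)] at h1
  rw [h1] at h2
  exact List.append_cancel_left h2

/-- The congruence `~Q` on the free monoid `Q*`: two words of states are equivalent
iff they act identically on `A*`. -/
def conQ (M : Mealy Q A) : Con (FreeMonoid Q) where
  r s u := ∀ w : List A, M.actW s.toList w = M.actW u.toList w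
  iseqv := ⟨fun _ _ => rfl, fun h w => (h w).symm, fun h1 h2 w => (h1 w).trans (h2 w)⟩
  mul' := by
    intro a b c d h1 h2 w
    simp only [FreeMonoid.toList_mul, actW_append_states]
    rw [h2 w, h1 (M.actW d.toList w)]

/-- The congruence `~A` on the free monoid `A*`: `u ~A v` iff `s @ u = s @ v` for all `s ∈ Q*`. -/
def conA (M : Mealy Q A) : Con (FreeMonoid A) where
  r u v := ∀ s : List Q, M.stW s u.toList = M.stW s v.toList
  iseqv := ⟨fun _ _ => rfl, fun h s => (h s).symm, fun h1 h2 s => (h1 s).trans (h2 s)⟩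
  mul' := by
    intro a b c d h1 h2 s
    simp only [FreeMonoid.toList_mul, stW_append]
    rw [h1 s, h2 (M.stW s b.toList)]

/-- The congruence `~D` on the free monoid `A*`: `u ~D v` iff `s @ u ~Q s @ v` for all `s ∈ Q*`. -/
def conD (M : Mealy Q A) : Con (FreeMonoid A) where
  r u v := ∀ (s : List Q) (w : List A),
    M.actW (M.stW s u.toList) w = M.actW (M.stW s v.toList) w
  iseqv := ⟨fun _ _ _ => rfl, fun h s w => (h s w).symm,
    fun h1 h2 s w => (h1 s w).trans (h2 s w)⟩
  mul' := by
    intro a b c d h1 h2 s w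
    simp only [FreeMonoid.toList_mul, stW_append]
    calc M.actW (M.stW (M.stW s a.toList) c.toList) w
        = M.actW (M.stW (M.stW s b.toList) c.toList) w :=
          M.actW_stW_congr (h1 s) c.toList w
      _ = M.actW (M.stW (M.stW s b.toList) d.toList) w := h2 _ w

/-- The automaton semigroup (monoid) `P_M = Q* / ~Q`. -/
abbrev PM (M : Mealy Q A) : Type _ := M.conQ.Quotient

/-- The dual automaton semigroup (monoid) `D_M = A* / ~A`. -/
abbrev DM (M : Mealy Q A) : Type _ := M.conA.Quotient

/-- The monoid `D'_M = A* / ~D`. -/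
abbrev DM' (M : Mealy Q A) : Type _ := M.conD.Quotient

/-- The class in `P_M` of a word of states. -/
def PMmk (M : Mealy Q A) (s : List Q) : M.PM := M.conQ.mk' (FreeMonoid.ofList s)

/-- The class in `D_M` of a word of letters. -/
def DMmk (M : Mealy Q A) (u : List A) : M.DM := M.conA.mk' (FreeMonoid.ofList u)

/-- The class in `D'_M` of a word of letters. -/
def DM'mk (M : Mealy Q A) (u : List A) : M.DM' := M.conD.mk' (FreeMonoid.ofList u)

/-- `M` is self-invertible if `P_M` is a group. -/
def SelfInvertible (M : Mealy Q A) : Prop :=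
  ∀ x : M.PM, ∃ y : M.PM, x * y = 1 ∧ y * x = 1

/-- The enriched automaton of an invertible automaton: states `Q ⊕ Q`, where `Sum.inl q` is `q`
and `Sum.inr q` is the formal inverse `q⁻¹`; `τ̃(q,a) = τ(q,a)` and
`τ̃(q⁻¹, q·a) = (a, (q@a)⁻¹)`. -/
noncomputable def enriched [Nonempty A] (M : Mealy Q A) : Mealy (Q ⊕ Q) A where
  step := fun p b =>
    match p with
    | Sum.inl q => (M.o q b, Sum.inl (M.t q b))
    | Sum.inr q =>
        (Function.invFun (M.o q) b, Sum.inr (M.t q (Function.invFun (M.o q) b)))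

/-- The monoid `Δ_M` presented by generators `Q ⊔ A` and relations `q a = (q·a)(q@a)`. -/
def deltaCon (M : Mealy Q A) : Con (FreeMonoid (Q ⊕ A)) :=
  conGen (fun w₁ w₂ => ∃ (q : Q) (a : A),
    w₁ = FreeMonoid.of (Sum.inl q) * FreeMonoid.of (Sum.inr a) ∧
    w₂ = FreeMonoid.of (Sum.inr (M.o q a)) * FreeMonoid.of (Sum.inl (M.t q a)))

end Mealy

/-- Evaluation of a positive word in the letters `y` (for `true`) and `z` (for `false`). -/
def evalPair {S : Type*} [Monoid S] (y z : S) : List Bool → S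
  | [] => 1
  | b :: l => (bif b then y else z) * evalPair y z l

/-- `y` and `z` freely generate a free subsemigroup of rank two: distinct nonempty
positive words in `y, z` represent distinct elements. -/
def IsFreePair {S : Type*} [Monoid S] (y z : S) : Prop :=
  ∀ l₁ l₂ : List Bool, l₁ ≠ [] → l₂ ≠ [] →
    evalPair y z l₁ = evalPair y z l₂ → l₁ = l₂

/-- `x` has infinite order: `{x, x², x³, …}` is infinite. -/
def InfiniteOrder {S : Type*} [Monoid S] (x : S) : Prop :=
  (Set.range fun n : ℕ => x ^ (n + 1)).Infinite

/-- The length-`n` prefix of a sequence. -/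
def seqTake {A : Type*} (ξ : ℕ → A) (n : ℕ) : List A := (List.range n).map ξ

/-- The `n`-th power `u^n` of a finite word. -/
def wpow {A : Type*} (u : List A) : ℕ → List A
  | 0 => []
  | n + 1 => u ++ wpow u n

/-- The eventually periodic sequence `u v v v ⋯`. -/
noncomputable def prePeriodic {A : Type*} [Nonempty A] (u v : List A) : ℕ → A :=
  fun n => if n < u.length then u.getD n (Classical.arbitrary A)
    else v.getD ((n - u.length) % v.length) (Classical.arbitrary A)

/-- The periodic sequence `u^ω = u u u ⋯`. -/
noncomputable def periodic {A : Type*} [Nonempty A] (u : List A) : ℕ → A :=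
  prePeriodic [] u

namespace Mealy

/-- The action of a word of states on a sequence: `s · ξ` is the sequence whose
length-`n` prefix is `s · (length-`n` prefix of `ξ`)`. -/
noncomputable def actSeq {Q A : Type*} [Nonempty A] (M : Mealy Q A)
    (s : List Q) (ξ : ℕ → A) : ℕ → A :=
  fun n => (M.actW s (seqTake ξ (n + 1))).getD n (Classical.arbitrary A)

/-- The language of all prefixes of the orbit of `a^ω` under `P_M`. -/
def Lan {Q A : Type*} (M : Mealy Q A) (a : A) : Set (List A) :=
  {v | ∃ (k : ℕ) (s : List Q), v = M.actW s (List.replicate k a)}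

/-- The degree of `v` in `Lan(a)`: the number of letters `b` with `v b ∈ Lan(a)`. -/
noncomputable def deg {Q A : Type*} (M : Mealy Q A) (a : A) (v : List A) : ℕ :=
  {b : A | v ++ [b] ∈ M.Lan a}.ncard

end Mealy

/-- A language is regular if it is recognized by a deterministic finite automaton. -/
def IsRegular {A : Type*} (L : Set (List A)) : Prop :=
  ∃ (σ : Type) (_ : Fintype σ) (dfa : DFA A σ), ∀ w : List A, w ∈ dfa.accepts ↔ w ∈ L

/-!
Since `P_M` is a group, it acts on `D_M` and on `D'_M`, and the sets in (2) and (3) are the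
orbits of the classes of `uⁿ`. Orbits of bounded size mean stabilizers of bounded index; as `P_M`
is finitely generated, these stabilizers all contain one subgroup `K` of finite index, and only
finitely many classes are fixed by `K`: a class `[w]` in `D_M` is determined by the states
`q @ (g · w)`, which depend only on the coset `gK`, and a class in `D'_M` by the sections
`g ↦ [g @ w]`, which are multiplicative on `K`. Conversely, if `[u]` has finite order in
`D'_M` then `[uᵃ] = [uᵇ]` for some `a < b`, and every `s · u^ω` is periodic with period
`(b - a)|u|` from position `a|u|` on. The unions in (4) and (5) are the orbits of the finitely
many powers of `[u]`.
-/

open MulAction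

section GroupTheory

variable {G : Type*} [Group G]

theorem finite_monoidHom_of_fg [Group.FG G] (H : Type*) [Group H] [Finite H] :
    Finite (G →* H) := by
  obtain ⟨S, hS⟩ := Group.fg_def.mp ‹_›
  exact Finite.of_injective (fun φ : G →* H => fun s : S => φ s) fun φ ψ h =>
    MonoidHom.eq_of_eqOn_dense hS fun s hs => congrFun h ⟨s, hs⟩

theorem exists_finiteIndex_le_of_index_le [Group.FG G] (C : ℕ) :
    ∃ K : Subgroup G, K.FiniteIndex ∧
      ∀ H : Subgroup G, H.index ≠ 0 → H.index ≤ C → K ≤ H := by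
  have := finite_monoidHom_of_fg (G := G) (Equiv.Perm (Fin C))
  refine ⟨⨅ φ : G →* Equiv.Perm (Fin C), φ.ker,
    Subgroup.finiteIndex_iInf fun φ => Subgroup.finiteIndex_ker φ, fun H h0 hC => ?_⟩
  have : H.FiniteIndex := ⟨h0⟩
  have : Fintype (G ⧸ H) := Fintype.ofFinite _
  obtain ⟨e⟩ : Nonempty ((G ⧸ H) ↪ Fin C) := Function.Embedding.nonempty_of_card_le <| by
    rwa [Fintype.card_fin, ← Nat.card_eq_fintype_card, ← Subgroup.index_eq_card]
  calc ⨅ φ : G →* Equiv.Perm (Fin C), φ.ker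
      ≤ ((Equiv.Perm.viaEmbeddingHom e).comp (MulAction.toPermHom G (G ⧸ H))).ker :=
        iInf_le _ _
    _ = (MulAction.toPermHom G (G ⧸ H)).ker :=
      MonoidHom.ker_comp_of_injective _ _ (Equiv.Perm.viaEmbeddingHom_injective e)
    _ = H.normalCore := H.normalCore_eq_ker.symm
    _ ≤ H := H.normalCore_le

variable {α : Type*} [MulAction G α]

theorem exists_finiteIndex_le_stabilizer [Group.FG G] (C : ℕ) {t : Set α}
    (ht : ∀ x ∈ t, (orbit G x).Finite ∧ (orbit G x).ncard ≤ C) :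
    ∃ K : Subgroup G, K.FiniteIndex ∧ ∀ x ∈ t, K ≤ stabilizer G x := by
  obtain ⟨K, hK, hKle⟩ := exists_finiteIndex_le_of_index_le (G := G) C
  refine ⟨K, hK, fun x hx => hKle _ ?_ ?_⟩ <;> rw [index_stabilizer]
  · exact ((Set.ncard_pos (ht x hx).1).mpr ⟨x, mem_orbit_self x⟩).ne'
  · exact (ht x hx).2

theorem smul_eq_out_smul {K : Subgroup G} {x : α} (hx : K ≤ stabilizer G x) (g : G) :
    g • x = (g : G ⧸ K).out • x := by
  obtain ⟨k, hk⟩ := QuotientGroup.mk_out_eq_mul K g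
  rw [hk, mul_smul, hx k.2]

theorem finite_setOf_le_stabilizer_of_separating {Z : Type*} [Finite Z] (K : Subgroup G)
    [K.FiniteIndex] (f : α → Z)
    (hf : ∀ x y : α, (∀ g : G, f (g • x) = f (g • y)) → x = y) :
    {x : α | K ≤ stabilizer G x}.Finite := by
  have : Finite (G ⧸ K) := K.finite_quotient_of_finiteIndex
  refine Set.Finite.of_finite_image (f := fun x (c : G ⧸ K) => f (c.out • x)) (Set.toFinite _)
    fun x hx y hy hxy => hf x y fun g => ?_
  rw [smul_eq_out_smul hx, smul_eq_out_smul hy]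
  exact congrFun hxy _

section MulOnSubgroup

variable {K : Subgroup G} {T : G → G} (hT : ∀ g, ∀ k ∈ K, T (g * k) = T g * T k)
include hT

theorem map_one_of_map_mul_mem : T 1 = 1 :=
  left_eq_mul.mp (by simpa only [mul_one] using hT 1 1 K.one_mem)

theorem map_inv_of_map_mul_mem {k : G} (hk : k ∈ K) : T k⁻¹ = (T k)⁻¹ :=
  eq_inv_of_mul_eq_one_right <| by
    rw [← hT _ _ (K.inv_mem hk), mul_inv_cancel, map_one_of_map_mul_mem hT]

theorem eq_of_map_mul_mem {S : Set G} (hS : Subgroup.closure S = K) {T' : G → G}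
    (hT' : ∀ g, ∀ k ∈ K, T' (g * k) = T' g * T' k)
    (hout : ∀ c : G ⧸ K, T c.out = T' c.out) (hgen : ∀ s ∈ S, T s = T' s) : T = T' := by
  have hK : ∀ k ∈ K, T k = T' k := by
    intro k hk
    rw [← hS] at hk
    induction hk using Subgroup.closure_induction with
    | mem s hs => exact hgen s hs
    | one => rw [map_one_of_map_mul_mem hT, map_one_of_map_mul_mem hT']
    | mul a b _ hb iha ihb =>
      rw [hT _ _ (hS ▸ hb), hT' _ _ (hS ▸ hb), iha, ihb]
    | inv a ha ih =>
      rw [map_inv_of_map_mul_mem hT (hS ▸ ha), map_inv_of_map_mul_mem hT' (hS ▸ ha), ih]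
  funext g
  obtain ⟨k, hk⟩ := QuotientGroup.mk_out_eq_mul K g
  have hg : g = (g : G ⧸ K).out * (k : G)⁻¹ := by rw [hk, mul_inv_cancel_right]
  rw [hg, hT _ _ (K.inv_mem k.2), hT' _ _ (K.inv_mem k.2), hout, hK _ (K.inv_mem k.2)]

end MulOnSubgroup

theorem finite_setOf_le_stabilizer_of_cocycle [Group.FG G] (K : Subgroup G) [K.FiniteIndex]
    (σ : α → G → G) (hσ : ∀ x g h, σ x (g * h) = σ (h • x) g * σ x h)
    (hfin : ∀ g, (Set.range fun x => σ x g).Finite) (hsep : Function.Injective σ) :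
    {x : α | K ≤ stabilizer G x}.Finite := by
  have : Finite (G ⧸ K) := K.finite_quotient_of_finiteIndex
  obtain ⟨S, hS⟩ := (Group.fg_iff_subgroup_fg K).mp inferInstance
  have hmul : ∀ x ∈ {x : α | K ≤ stabilizer G x}, ∀ g, ∀ k ∈ K,
      σ x (g * k) = σ x g * σ x k :=
    fun x hx g k hk => by rw [hσ, hx hk]
  refine Set.Finite.of_finite_image
    (f := fun x => ((fun c : G ⧸ K => σ x c.out), (fun s : S => σ x s)))
    (((Set.Finite.pi fun c : G ⧸ K => hfin c.out).prod
      (Set.Finite.pi fun s : S => hfin s)).subset ?_) fun x hx y hy hxy => hsep ?_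
  · rintro _ ⟨x, -, rfl⟩
    exact ⟨fun c _ => ⟨x, rfl⟩, fun s _ => ⟨x, rfl⟩⟩
  · simp only [Prod.mk.injEq] at hxy
    exact eq_of_map_mul_mem (hmul x hx) hS (hmul y hy) (congrFun hxy.1)
      fun s hs => congrFun hxy.2 ⟨s, hs⟩

end GroupTheory

theorem finite_range_pow_of_finite_range_pow_succ {S : Type*} [Monoid S] {x : S}
    (h : (Set.range fun n : ℕ => x ^ (n + 1)).Finite) : (Set.range fun n : ℕ => x ^ n).Finite :=
  (h.insert 1).subset <| by
    rintro _ ⟨_ | n, rfl⟩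
    exacts [Or.inl (pow_zero x), Or.inr ⟨n, rfl⟩]

namespace Mealy

variable {Q A : Type*} (M : Mealy Q A)

theorem actA_length (q : Q) (w : List A) : (M.actA q w).length = w.length := by
  induction w generalizing q with
  | nil => rfl
  | cons a w ih => simp [actA, ih]

theorem actW_length (s : List Q) (w : List A) : (M.actW s w).length = w.length := by
  induction s with
  | nil => rfl
  | cons q s ih => simp [actW, actA_length, ih]

theorem stW_length (s : List Q) (w : List A) : (M.stW s w).length = s.length := by
  induction s with
  | nil => rfl
  | cons q s ih => simp [stW, ih]

theorem stW_append_states (r s : List Q) (w : List A) :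
    M.stW (r ++ s) w = M.stW r (M.actW s w) ++ M.stW s w := by
  induction r with
  | nil => simp [stW]
  | cons q r ih => simp [stW, actW_append_states, ih]

theorem PMmk_surjective : Function.Surjective M.PMmk := fun x =>
  ⟨x.out.toList, (Quotient.out_eq x)⟩

theorem PMmk_append (s t : List Q) : M.PMmk (s ++ t) = M.PMmk s * M.PMmk t :=
  map_mul M.conQ.mk' _ _

theorem PMmk_eq_iff {s t : List Q} : M.PMmk s = M.PMmk t ↔ ∀ w, M.actW s w = M.actW t w :=
  M.conQ.eq

noncomputable instance [h : Fact M.SelfInvertible] : Group M.PM :=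
  { (inferInstance : Monoid M.PM) with
    inv := fun x => (h.out x).choose
    inv_mul_cancel := fun x => (h.out x).choose_spec.2 }

instance [Finite Q] : Monoid.FG M.PM := Monoid.fg_of_surjective M.conQ.mk' M.conQ.mk'_surjective

instance [Finite Q] [Fact M.SelfInvertible] : Group.FG M.PM :=
  Group.fg_iff_monoid_fg.mpr inferInstance

def IsInvariant (c : Con (FreeMonoid A)) : Prop :=
  ∀ (s : List Q) (v w : FreeMonoid A), c v w →
    c (.ofList (M.actW s v.toList)) (.ofList (M.actW s w.toList))

variable {M}

theorem mk_wpow (c : Con (FreeMonoid A)) (u : List A) (n : ℕ) :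
    c.mk' (.ofList (wpow u n)) = c.mk' (.ofList u) ^ n := by
  induction n with
  | zero => rfl
  | succ n ih => rw [wpow, FreeMonoid.ofList_append, map_mul, ih, pow_succ']

instance {c : Con (FreeMonoid A)} [hc : Fact (M.IsInvariant c)] : MulAction M.PM c.Quotient where
  smul g x := Quotient.liftOn₂ g x (fun s w => c.mk' (.ofList (M.actW s.toList w.toList)))
    fun s w s' w' hs hw => by
      rw [show M.actW s.toList w.toList = M.actW s'.toList w.toList from hs _]
      exact c.eq.mpr (hc.out _ _ _ hw)
  one_smul x := Quotient.inductionOn x fun _ => rfl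
  mul_smul g h x := Quotient.inductionOn₃ g h x fun s t w => by
    change c.mk' _ = c.mk' _
    simp [actW_append_states]

section InvariantCon

variable {c : Con (FreeMonoid A)} [Fact (M.IsInvariant c)]

theorem orbit_mk (w : List A) : orbit M.PM (c.mk' (.ofList w)) =
    (fun v => c.mk' (.ofList v)) '' {v | ∃ s, v = M.actW s w} := by
  ext x
  constructor
  · rintro ⟨g, rfl⟩
    obtain ⟨s, rfl⟩ := M.PMmk_surjective g
    exact ⟨_, ⟨s, rfl⟩, rfl⟩
  · rintro ⟨_, ⟨s, rfl⟩, rfl⟩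
    exact ⟨M.PMmk s, rfl⟩

theorem orbit_finite [Finite A] (x : c.Quotient) : (orbit M.PM x).Finite := by
  obtain ⟨w, rfl⟩ := c.mk'_surjective x
  rw [← FreeMonoid.ofList_toList w, orbit_mk]
  refine ((List.finite_length_eq A w.toList.length).subset ?_).image _
  rintro _ ⟨s, rfl⟩
  exact M.actW_length s _

theorem finite_image_orbits_iff [Finite A] (u : List A) :
    ((fun w => c.mk' (.ofList w)) ''
      {w | ∃ (n : ℕ) (s : List Q), w = M.actW s (wpow u n)}).Finite ↔
      (Set.range fun n : ℕ => c.mk' (.ofList u) ^ (n + 1)).Finite := by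
  have hunion : (fun w => c.mk' (.ofList w)) ''
      {w | ∃ (n : ℕ) (s : List Q), w = M.actW s (wpow u n)} =
      ⋃ y ∈ Set.range fun n : ℕ => c.mk' (.ofList u) ^ n, orbit M.PM y := by
    simp only [Set.biUnion_range, ← mk_wpow c, orbit_mk, ← Set.image_iUnion]
    congr 1
    ext w
    simp
  rw [hunion]
  refine ⟨fun h => h.subset ?_, fun h => (finite_range_pow_of_finite_range_pow_succ h).biUnion
    fun y _ => orbit_finite y⟩
  rintro _ ⟨n, rfl⟩
  exact Set.mem_biUnion ⟨n + 1, rfl⟩ (mem_orbit_self _)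

theorem finite_range_pow_of_orbit_ncard_le [Finite Q] [Finite A] [Fact M.SelfInvertible]
    (hc : ∀ K : Subgroup M.PM, K.FiniteIndex →
      {x : c.Quotient | K ≤ stabilizer M.PM x}.Finite)
    (u : List A) (h : ∃ C, ∀ n, ((fun w => c.mk' (.ofList w)) ''
      {w | ∃ s : List Q, w = M.actW s (wpow u n)}).ncard ≤ C) :
    (Set.range fun n : ℕ => c.mk' (.ofList u) ^ (n + 1)).Finite := by
  obtain ⟨C, hC⟩ := h
  obtain ⟨K, hK, hKle⟩ := exists_finiteIndex_le_stabilizer (G := M.PM) C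
    (t := Set.range fun n : ℕ => c.mk' (.ofList u) ^ (n + 1)) <| by
      rintro _ ⟨n, rfl⟩
      refine ⟨orbit_finite _, ?_⟩
      beta_reduce
      rw [← mk_wpow c, orbit_mk]
      exact hC _
  exact (hc K hK).subset hKle

end InvariantCon

variable (M)

theorem isInvariant_conA : M.IsInvariant M.conA := fun t v w h r => by
  have h1 := M.stW_append_states r t v.toList
  rw [h (r ++ t), M.stW_append_states, h t] at h1
  exact (List.append_cancel_right h1).symm

instance : Fact (M.IsInvariant M.conA) := ⟨M.isInvariant_conA⟩

def stateAfter : M.DM → Q → Q :=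
  Quotient.lift (fun w q => M.stA q w.toList) fun v w h => funext fun q => by
    simpa [stW, actW] using h [q]

variable {M} in
theorem eq_of_forall_stateAfter_smul {x y : M.DM}
    (h : ∀ g : M.PM, M.stateAfter (g • x) = M.stateAfter (g • y)) : x = y := by
  induction x using Quotient.inductionOn with | h v => ?_
  induction y using Quotient.inductionOn with | h w => ?_
  refine M.conA.eq.mpr fun r => ?_
  induction r with
  | nil => rfl
  | cons q r ih =>
    show M.stA q (M.actW r v.toList) :: M.stW r v.toList =
      M.stA q (M.actW r w.toList) :: M.stW r w.toList
    rw [ih]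
    exact congrArg (· :: _) (congrFun (h (M.PMmk r)) q)

theorem finite_setOf_le_stabilizer_DM [Finite Q] [Fact M.SelfInvertible] (K : Subgroup M.PM)
    [K.FiniteIndex] : {x : M.DM | K ≤ stabilizer M.PM x}.Finite :=
  finite_setOf_le_stabilizer_of_separating K M.stateAfter fun _ _ => eq_of_forall_stateAfter_smul

theorem conD_iff {v w : FreeMonoid A} :
    M.conD v w ↔ ∀ s, M.PMmk (M.stW s v.toList) = M.PMmk (M.stW s w.toList) :=
  forall_congr' fun _ => M.PMmk_eq_iff.symm

theorem isInvariant_conD [Fact M.SelfInvertible] : M.IsInvariant M.conD := fun t v w h =>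
  M.conD_iff.mpr fun r => by
    have key : ∀ v : FreeMonoid A, M.PMmk (M.stW (r ++ t) v.toList) =
        M.PMmk (M.stW r (M.actW t v.toList)) * M.PMmk (M.stW t v.toList) := fun v => by
      rw [stW_append_states, PMmk_append]
    have h1 := key v
    rw [M.conD_iff.mp h (r ++ t), key w, M.conD_iff.mp h t] at h1
    exact (mul_right_cancel h1).symm

instance [Fact M.SelfInvertible] : Fact (M.IsInvariant M.conD) := ⟨M.isInvariant_conD⟩

def sec : M.DM' → M.PM → M.PM := fun x g =>
  Quotient.liftOn₂ x g (fun w s => M.PMmk (M.stW s.toList w.toList)) fun _ _ _ s' hw hs =>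
    (M.PMmk_eq_iff.mpr (M.actW_stW_congr hs _)).trans (M.conD_iff.mp hw s'.toList)

theorem sec_mul [Fact M.SelfInvertible] (x : M.DM') (g h : M.PM) :
    M.sec x (g * h) = M.sec (h • x) g * M.sec x h := by
  induction x using Quotient.inductionOn with | h w => ?_
  induction g using Quotient.inductionOn with | h r => ?_
  induction h using Quotient.inductionOn with | h s => ?_
  exact (congrArg M.PMmk (M.stW_append_states r.toList s.toList w.toList)).trans
    (M.PMmk_append _ _)

theorem finite_range_sec [Finite Q] (g : M.PM) : (Set.range fun x => M.sec x g).Finite := by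
  obtain ⟨s, rfl⟩ := M.PMmk_surjective g
  refine ((List.finite_length_eq Q s.length).image M.PMmk).subset ?_
  rintro _ ⟨x, rfl⟩
  induction x using Quotient.inductionOn with | h w => exact ⟨_, M.stW_length s _, rfl⟩

theorem sec_injective : Function.Injective M.sec := by
  intro x y h
  induction x using Quotient.inductionOn with | h v => ?_
  induction y using Quotient.inductionOn with | h w => ?_
  exact M.conD.eq.mpr (M.conD_iff.mpr fun s => congrFun h (M.PMmk s))

theorem finite_setOf_le_stabilizer_DM' [Finite Q] [Fact M.SelfInvertible] (K : Subgroup M.PM)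
    [K.FiniteIndex] : {x : M.DM' | K ≤ stabilizer M.PM x}.Finite :=
  finite_setOf_le_stabilizer_of_cocycle K M.sec M.sec_mul M.finite_range_sec M.sec_injective

theorem finite_range_pow_DM'_of_DM {u : List A}
    (h : (Set.range fun n : ℕ => M.DMmk u ^ (n + 1)).Finite) :
    (Set.range fun n : ℕ => M.DM'mk u ^ (n + 1)).Finite := by
  have hle : M.conA ≤ M.conD := fun v w h s z => by rw [h s]
  refine (h.image (Con.map _ _ hle)).subset ?_
  rintro _ ⟨n, rfl⟩
  exact ⟨_, ⟨n, rfl⟩, map_pow _ _ _⟩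

end Mealy

section Sequences

variable {α : Type*}

theorem seqTake_length (ξ : ℕ → α) (n : ℕ) : (seqTake ξ n).length = n := by
  simp [seqTake]

theorem seqTake_add (ξ : ℕ → α) (m n : ℕ) :
    seqTake ξ (m + n) = seqTake ξ m ++ seqTake (fun i => ξ (m + i)) n := by
  simp [seqTake, List.range_add, Function.comp_def]

theorem finite_setOf_forall_add_eq [Finite α] {a b : ℕ} (hab : a < b) :
    {ξ : ℕ → α | ∀ j, ξ (a + j) = ξ (b + j)}.Finite := by
  refine Set.Finite.of_finite_image (f := fun ξ (i : Fin b) => ξ i) (Set.toFinite _)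
    fun ξ hξ η hη h => funext fun k => ?_
  induction k using Nat.strong_induction_on with
  | _ k ih =>
    rcases lt_or_ge k b with hk | hk
    · exact congrFun h ⟨k, hk⟩
    · obtain ⟨j, rfl⟩ := Nat.exists_eq_add_of_le hk
      rw [← hξ j, ← hη j]
      exact ih _ (by omega)

variable [Nonempty α]

theorem periodic_mul_add (u : List α) (n i : ℕ) :
    periodic u (n * u.length + i) = periodic u i := by
  simp [periodic, prePeriodic]

theorem seqTake_periodic (u : List α) (n : ℕ) :
    seqTake (periodic u) (n * u.length) = wpow u n := by
  induction n with
  | zero => simp [seqTake, wpow]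
  | succ n ih =>
    have hshift : (fun i => periodic u (u.length + i)) = periodic u :=
      funext fun i => by simpa using periodic_mul_add u 1 i
    rw [Nat.succ_mul, add_comm, seqTake_add, hshift, ih, wpow]
    congr 1
    refine List.ext_getElem (seqTake_length _ _) fun i h _ => ?_
    rw [seqTake_length] at h
    simp [seqTake, periodic, prePeriodic, Nat.mod_eq_of_lt h, h]

end Sequences

namespace Mealy

variable {Q A : Type*} [Nonempty A] (M : Mealy Q A)

theorem actSeq_eq_getD (s : List Q) (ξ : ℕ → A) {k m : ℕ} (h : k < m) :
    M.actSeq s ξ k = (M.actW s (seqTake ξ m)).getD k (Classical.arbitrary A) := by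
  obtain ⟨j, rfl⟩ := Nat.exists_eq_add_of_lt h
  rw [actSeq, show k + j + 1 = k + 1 + j by omega, seqTake_add ξ (k + 1) j, actW_append,
    List.getD_append _ _ _ _ (by rw [actW_length, seqTake_length]; omega)]

theorem seqTake_actSeq (s : List Q) (ξ : ℕ → A) (n : ℕ) :
    seqTake (M.actSeq s ξ) n = M.actW s (seqTake ξ n) := by
  refine List.ext_getElem (by rw [seqTake_length, actW_length, seqTake_length])
    fun k h₁ h₂ => ?_
  rw [seqTake_length] at h₁
  simp only [seqTake, List.getElem_map, List.getElem_range]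
  rw [M.actSeq_eq_getD s ξ h₁, List.getD_eq_getElem _ _ h₂]
  rfl

theorem actSeq_add (s : List Q) (ξ : ℕ → A) (m j : ℕ) :
    M.actSeq s ξ (m + j) = M.actSeq (M.stW s (seqTake ξ m)) (fun i => ξ (m + i)) j := by
  rw [actSeq, add_assoc, seqTake_add, actW_append,
    List.getD_append_right _ _ _ _ (by rw [actW_length, seqTake_length]; omega),
    actW_length, seqTake_length, Nat.add_sub_cancel_left, actSeq]

theorem actSeq_congr {s t : List Q} (h : M.PMmk s = M.PMmk t) : M.actSeq s = M.actSeq t := by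
  funext ξ n
  simp only [actSeq, M.PMmk_eq_iff.mp h]

theorem actSeq_periodic_mul_add (s : List Q) (u : List A) (n j : ℕ) :
    M.actSeq s (periodic u) (n * u.length + j) = M.actSeq (M.stW s (wpow u n)) (periodic u) j := by
  rw [actSeq_add, seqTake_periodic]
  exact congrArg (M.actSeq _ · j) (funext (periodic_mul_add u n))

theorem ncard_image_orbit_wpow_le {β : Type*} (f : List A → β) (u : List A) (n : ℕ)
    (hfin : {ξ : ℕ → A | ∃ s : List Q, ξ = M.actSeq s (periodic u)}.Finite) :
    (f '' {w | ∃ s : List Q, w = M.actW s (wpow u n)}).ncard ≤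
      {ξ : ℕ → A | ∃ s : List Q, ξ = M.actSeq s (periodic u)}.ncard := by
  have hsub : {w | ∃ s : List Q, w = M.actW s (wpow u n)} ⊆
      (fun ξ => seqTake ξ (n * u.length)) ''
        {ξ | ∃ s : List Q, ξ = M.actSeq s (periodic u)} := by
    rintro _ ⟨s, rfl⟩
    exact ⟨_, ⟨s, rfl⟩, (M.seqTake_actSeq s _ _).trans (congrArg _ (seqTake_periodic u n))⟩
  calc (f '' {w | ∃ s : List Q, w = M.actW s (wpow u n)}).ncard
      ≤ (f '' ((fun ξ => seqTake ξ (n * u.length)) '' _)).ncard :=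
        Set.ncard_le_ncard (Set.image_mono hsub) ((hfin.image _).image _)
    _ ≤ _ := (Set.ncard_image_le (hfin.image _)).trans (Set.ncard_image_le hfin)

theorem finite_orbit_periodic_of_finite_range_pow [Finite A] {u : List A} (hu : u ≠ [])
    (h : (Set.range fun n : ℕ => M.DM'mk u ^ (n + 1)).Finite) :
    {ξ : ℕ → A | ∃ s : List Q, ξ = M.actSeq s (periodic u)}.Finite := by
  obtain ⟨a, b, hab, heq⟩ := h.exists_lt_map_eq_of_forall_mem
    (f := fun n : ℕ => M.DM'mk u ^ (n + 1)) Set.mem_range_self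
  have hsec : ∀ s : List Q,
      M.PMmk (M.stW s (wpow u (a + 1))) = M.PMmk (M.stW s (wpow u (b + 1))) :=
    M.conD_iff.mp <| M.conD.eq.mp <|
      (mk_wpow M.conD u (a + 1)).trans (heq.trans (mk_wpow M.conD u (b + 1)).symm)
  have hL : 0 < u.length := List.length_pos_iff.mpr hu
  refine (finite_setOf_forall_add_eq (a := (a + 1) * u.length) (b := (b + 1) * u.length)
    (Nat.mul_lt_mul_of_pos_right (by omega) hL)).subset ?_
  rintro _ ⟨s, rfl⟩ j
  rw [actSeq_periodic_mul_add, actSeq_periodic_mul_add, M.actSeq_congr (hsec s)]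

end Mealy

theorem stmt17_general {Q A : Type*} [Fintype Q] [Fintype A] [Nonempty A]
    (M : Mealy Q A) (hg : M.SelfInvertible) (u : List A) (hu : u ≠ []) :
    [ Set.Finite {ξ : ℕ → A | ∃ s : List Q, ξ = M.actSeq s (periodic u)},
      ∃ C : ℕ, ∀ n : ℕ,
        (M.DMmk '' {w : List A | ∃ s : List Q, w = M.actW s (wpow u n)}).ncard ≤ C,
      ∃ C : ℕ, ∀ n : ℕ,
        (M.DM'mk '' {w : List A | ∃ s : List Q, w = M.actW s (wpow u n)}).ncard ≤ C,
      Set.Finite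
        (M.DMmk '' {w : List A | ∃ (n : ℕ) (s : List Q), w = M.actW s (wpow u n)}),
      Set.Finite
        (M.DM'mk '' {w : List A | ∃ (n : ℕ) (s : List Q), w = M.actW s (wpow u n)}),
      Set.Finite (Set.range fun n : ℕ => (M.DMmk u) ^ (n + 1)),
      Set.Finite (Set.range fun n : ℕ => (M.DM'mk u) ^ (n + 1)) ].TFAE := by
  have := Fact.mk hg
  tfae_have 1 → 2 := fun h1 => ⟨_, fun n => M.ncard_image_orbit_wpow_le M.DMmk u n h1⟩
  tfae_have 2 → 6 := Mealy.finite_range_pow_of_orbit_ncard_le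
    (fun K _ => M.finite_setOf_le_stabilizer_DM K) u
  tfae_have 3 → 7 := Mealy.finite_range_pow_of_orbit_ncard_le
    (fun K _ => M.finite_setOf_le_stabilizer_DM' K) u
  tfae_have 6 → 7 := M.finite_range_pow_DM'_of_DM
  tfae_have 7 → 1 := M.finite_orbit_periodic_of_finite_range_pow hu
  tfae_have 4 ↔ 6 := Mealy.finite_image_orbits_iff u
  tfae_have 5 ↔ 7 := Mealy.finite_image_orbits_iff u
  tfae_have 5 → 3 := fun h5 => ⟨_, fun n => Set.ncard_le_ncard (Set.image_mono <| by
    rintro _ ⟨s, rfl⟩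
    exact ⟨n, s, rfl⟩) h5⟩
  tfae_finish

/-- For a self-invertible Mealy automaton `M` and a nonempty word `u ∈ A*`,
the following are equivalent: (1) the orbit `P_M·u^ω` is finite; (2) the number of
`~A`-classes met by `{s·uⁿ : s ∈ Q*}` is bounded independently of `n`; (3) the same for
`~D`-classes; (4) `⋃ₙ {s·uⁿ}` meets only finitely many `~A`-classes; (5) the same for
`~D`-classes; (6) the image of `u` in `D_M` has finite order; (7) the image of `u` in
`D'_M` has finite order. -/
theorem stmt17 {Q A : Type*} [Fintype Q] [Nonempty Q] [Fintype A] [Nonempty A]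
    (M : Mealy Q A) (hg : M.SelfInvertible) (u : List A) (hu : u ≠ []) :
    [ Set.Finite {ξ : ℕ → A | ∃ s : List Q, ξ = M.actSeq s (periodic u)},
      ∃ C : ℕ, ∀ n : ℕ,
        (M.DMmk '' {w : List A | ∃ s : List Q, w = M.actW s (wpow u n)}).ncard ≤ C,
      ∃ C : ℕ, ∀ n : ℕ,
        (M.DM'mk '' {w : List A | ∃ s : List Q, w = M.actW s (wpow u n)}).ncard ≤ C,
      Set.Finite
        (M.DMmk '' {w : List A | ∃ (n : ℕ) (s : List Q), w = M.actW s (wpow u n)}),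
      Set.Finite
        (M.DM'mk '' {w : List A | ∃ (n : ℕ) (s : List Q), w = M.actW s (wpow u n)}),
      Set.Finite (Set.range fun n : ℕ => (M.DMmk u) ^ (n + 1)),
      Set.Finite (Set.range fun n : ℕ => (M.DM'mk u) ^ (n + 1)) ].TFAE :=
  stmt17_general M hg u hu

end AutGrp
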